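/- Let α ≥ m ≥ 1 be integers and M = diag(M_0,...,M_{m-1}) a diagonal matrix with M_{m-1} ≠ 0. Define ℛ_j as in the Laguerre–Sobolev setting. Then deg ℛ_j = α + j - 1 if M_{j-1} ≠ 0 and deg ℛ_j = m - j if M_{j-1} = 0; consequently, with s = #{j : 1 ≤ j ≤ m, M_{j-1} ≠ 0}, the Casorati determinant Ω(x) = det(ℛ_i(x-j))_{i,j=1}^m has degree sα + (m-s)(m+1) - 2Σ_{j: M_{j-1}=0} j. -/

import Mathlib

open Polynomial Finset

/-- ℛ_j(x) = ((α-1)!/(m-j)!)(x+1)_{m-j}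
             + (j-1)!(x+1)_α ∑_{i=0}^{m-1}((-1)^i M_{j-1,i}/(α+i)!)(x-i+1)_i
(here j = j0+1 with j0 : Fin m). -/
noncomputable def calR (α m : ℕ) (M : Matrix (Fin m) (Fin m) ℝ) (j0 : Fin m) : Polynomial ℝ :=
  Polynomial.C ((Nat.factorial (α - 1) : ℝ) / (Nat.factorial (m - 1 - j0))) *
      (ascPochhammer ℝ (m - 1 - (j0 : ℕ))).comp (Polynomial.X + 1)
    + Polynomial.C ((Nat.factorial j0 : ℝ)) * ((ascPochhammer ℝ α).comp (Polynomial.X + 1)) *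
      ∑ i : Fin m, Polynomial.C ((-1) ^ (i : ℕ) * M j0 i / (Nat.factorial (α + i))) *
        (ascPochhammer ℝ (i : ℕ)).comp (Polynomial.X - Polynomial.C (i : ℝ) + 1)

/-!
Subtracting columns turns the Casorati matrix `(p i (x - a - j))` into the matrix of iterated
forward differences `Δ_y^j (p i (x - y))` at `y = a`. Its entry `(i, j)` has degree at most
`deg p i - j`, with coefficient `(-1)^j * (deg p i).descFactorial j * lc (p i)` in that degree.
Hence the determinant has degree at most `∑ deg p i - ∑ j`, and its coefficient there is, up to
sign, `∏ lc (p i)` times the Vandermonde determinant of the degrees `deg p i`, nonzero when these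
are distinct.

For diagonal `M` only the term `i = j0` of the sum in `ℛ_j` survives, so `deg ℛ_j` is `α + j0`
or `m - 1 - j0` according as `M_{j0} ≠ 0` or not, and `α ≥ m` makes these pairwise distinct.
-/

open fwdDiff
open scoped Nat

namespace Polynomial

theorem coeff_prod_sum_of_natDegree_le {ι R : Type*} [CommSemiring R] (s : Finset ι)
    (f : ι → R[X]) (a : ι → ℕ) (h : ∀ i ∈ s, (f i).natDegree ≤ a i) :
    (∏ i ∈ s, f i).coeff (∑ i ∈ s, a i) = ∏ i ∈ s, (f i).coeff (a i) := by
  classical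
  induction s using Finset.induction_on with
  | empty => simp
  | insert j s hj ih =>
    have hs : ∀ i ∈ s, (f i).natDegree ≤ a i := fun i hi => h i (mem_insert_of_mem hi)
    rw [prod_insert hj, sum_insert hj, prod_insert hj,
      coeff_mul_add_eq_of_natDegree_le (h j (mem_insert_self j s))
        ((natDegree_prod_le s f).trans (sum_le_sum hs)), ih hs]

theorem degree_ascPochhammer_comp_X_add_C {R : Type*} [CommRing R] [IsDomain R] (n : ℕ)
    (a : R) : ((ascPochhammer R n).comp (X + C a)).degree = n := by
  rw [degree_eq_natDegree ((monic_ascPochhammer R n).comp_X_add_C a).ne_zero, natDegree_comp,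
    ascPochhammer_natDegree, natDegree_X_add_C, mul_one]

end Polynomial

namespace Matrix

variable {n R : Type*} [Fintype n] [DecidableEq n] [CommRing R]

theorem coeff_det_eq_zero_of_natDegree_le {A : Matrix n n R[X]} {a : n → ℕ}
    (h : ∀ i j, (A i j).natDegree ≤ a i) {k : ℕ} (hk : ∑ i, a i < k) : A.det.coeff k = 0 := by
  rw [det_apply, finsetSum_coeff]
  refine sum_eq_zero fun σ _ => ?_
  rw [Units.smul_def, coeff_smul, coeff_eq_zero_of_natDegree_lt, smul_zero]
  calc (∏ i, A (σ i) i).natDegree ≤ ∑ i, (A (σ i) i).natDegree := natDegree_prod_le _ _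
    _ ≤ ∑ i, a (σ i) := sum_le_sum fun i _ => h _ _
    _ = ∑ i, a i := Equiv.sum_comp σ a
    _ < k := hk

theorem natDegree_det_le_of_natDegree_le {A : Matrix n n R[X]} {a : n → ℕ}
    (h : ∀ i j, (A i j).natDegree ≤ a i) : A.det.natDegree ≤ ∑ i, a i :=
  natDegree_le_iff_coeff_eq_zero.mpr fun _ => coeff_det_eq_zero_of_natDegree_le h

theorem coeff_det_of_natDegree_le {A : Matrix n n R[X]} {a : n → ℕ}
    (h : ∀ i j, (A i j).natDegree ≤ a i) :
    A.det.coeff (∑ i, a i) = (of fun i j => (A i j).coeff (a i)).det := by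
  rw [det_apply, det_apply, finsetSum_coeff]
  refine sum_congr rfl fun σ _ => ?_
  rw [Units.smul_def, coeff_smul, ← Equiv.sum_comp σ a,
    coeff_prod_sum_of_natDegree_le _ _ _ fun i _ => h _ _, Units.smul_def]
  rfl

end Matrix

theorem AddMonoidHom.map_fwdDiff_iter {M G G' : Type*} [AddCommMonoid M] [AddCommGroup G]
    [AddCommGroup G'] (g : G →+ G') (h : M) (f : M → G) (n : ℕ) (y : M) :
    g (Δ_[h] ^[n] f y) = Δ_[h] ^[n] (g ∘ f) y := by
  simp only [fwdDiff_iter_eq_sum_shift, map_sum, map_zsmul, Function.comp_apply]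

variable {R : Type*} [CommRing R]

namespace Polynomial

theorem fwdDiff_iter_eval_of_natDegree_le {P : R[X]} {n : ℕ} (hP : P.natDegree ≤ n) :
    Δ_[1] ^[n] P.eval = fun _ => P.coeff n * n ! := by
  rcases hP.lt_or_eq with hlt | rfl
  · rw [fwdDiff_iter_eq_zero_of_degree_lt hlt, coeff_eq_zero_of_natDegree_lt hlt, zero_mul]
    rfl
  · rw [fwdDiff_iter_degree_eq_factorial]
    rfl

theorem coeff_comp_X_sub_C (p : R[X]) (y : R) (k : ℕ) :
    (p.comp (X - C y)).coeff k = ((hasseDeriv k p).comp (C (-1) * X)).eval y := by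
  rw [eval_comp, eval_mul, eval_C, eval_X, neg_one_mul, ← taylor_coeff, taylor_apply, C_neg,
    ← sub_eq_add_neg]

theorem natDegree_hasseDeriv_comp_C_mul_X_le (p : R[X]) (k : ℕ) (c : R) :
    ((hasseDeriv k p).comp (C c * X)).natDegree ≤ p.natDegree - k := by
  have hX : (C c * X).natDegree ≤ 1 := (natDegree_C_mul_le _ _).trans natDegree_X_le
  exact (natDegree_comp_le.trans (by nlinarith)).trans (natDegree_hasseDeriv_le p k)

theorem coeff_fwdDiff_iter_comp_X_sub_C (p : R[X]) (n k : ℕ) (a : R) :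
    (Δ_[1] ^[n] (fun y => p.comp (X - C y)) a).coeff k =
      Δ_[1] ^[n] ((hasseDeriv k p).comp (C (-1) * X)).eval a := by
  rw [← lcoeff_apply, ← LinearMap.toAddMonoidHom_coe, AddMonoidHom.map_fwdDiff_iter]
  exact congrArg (fun f => Δ_[1] ^[n] f a) (_root_.funext fun y => coeff_comp_X_sub_C p y k)

theorem coeff_fwdDiff_iter_comp_X_sub_C_eq_zero (p : R[X]) {n k : ℕ} (h : p.natDegree < k + n)
    (a : R) : (Δ_[1] ^[n] (fun y => p.comp (X - C y)) a).coeff k = 0 := by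
  rw [coeff_fwdDiff_iter_comp_X_sub_C]
  rcases Nat.eq_zero_or_pos n with rfl | hn
  · simp [hasseDeriv_eq_zero_of_lt_natDegree p k h]
  · rw [fwdDiff_iter_eq_zero_of_degree_lt ((natDegree_hasseDeriv_comp_C_mul_X_le p k _).trans_lt
      (by omega))]
    rfl

theorem coeff_fwdDiff_iter_comp_X_sub_C_natDegree_sub (p : R[X]) {n : ℕ} (h : n ≤ p.natDegree)
    (a : R) : (Δ_[1] ^[n] (fun y => p.comp (X - C y)) a).coeff (p.natDegree - n) =
      (-1) ^ n * p.natDegree.descFactorial n * p.leadingCoeff := by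
  rw [coeff_fwdDiff_iter_comp_X_sub_C, fwdDiff_iter_eval_of_natDegree_le
    ((natDegree_hasseDeriv_comp_C_mul_X_le p _ _).trans (by omega)), comp_C_mul_X_coeff,
    hasseDeriv_coeff, Nat.add_sub_cancel' h, Nat.choose_symm h,
    Nat.descFactorial_eq_factorial_mul_choose, leadingCoeff]
  push_cast
  ring

theorem natDegree_fwdDiff_iter_comp_X_sub_C_mul_X_pow_le (p : R[X]) (n : ℕ) (a : R) :
    (Δ_[1] ^[n] (fun y => p.comp (X - C y)) a * X ^ n).natDegree ≤ p.natDegree :=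
  natDegree_le_iff_coeff_eq_zero.mpr fun k hk => by
    rw [coeff_mul_X_pow']
    split_ifs with hnk
    · exact coeff_fwdDiff_iter_comp_X_sub_C_eq_zero p (by omega) a
    · rfl

theorem coeff_fwdDiff_iter_comp_X_sub_C_mul_X_pow_natDegree (p : R[X]) (n : ℕ) (a : R) :
    (Δ_[1] ^[n] (fun y => p.comp (X - C y)) a * X ^ n).coeff p.natDegree =
      (-1) ^ n * p.natDegree.descFactorial n * p.leadingCoeff := by
  rw [coeff_mul_X_pow']
  split_ifs with hn
  · exact coeff_fwdDiff_iter_comp_X_sub_C_natDegree_sub p hn a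
  · rw [Nat.descFactorial_eq_zero_iff_lt.mpr (by omega)]
    simp

end Polynomial

variable {m : ℕ}

/-- Columns are indexed from `0`: the paper's `Ω` is `(casoratiMatrix ℛ 1).det`. -/
noncomputable def casoratiMatrix (p : Fin m → R[X]) (a : R) : Matrix (Fin m) (Fin m) R[X] :=
  Matrix.of fun i j => (p i).comp (X - C ((j : R) + a))

theorem det_casoratiMatrix_eq_det_fwdDiff (p : Fin m → R[X]) (a : R) :
    (casoratiMatrix p a).det =
      (Matrix.of fun i (j : Fin m) => Δ_[1] ^[j] (fun y => (p i).comp (X - C y)) a).det := by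
  let U : Matrix (Fin m) (Fin m) R[X] :=
    Matrix.of fun l j => (((-1 : ℤ) ^ ((j : ℕ) - l) * (j : ℕ).choose l : ℤ) : R[X])
  have hU : U.det = 1 := by
    rw [Matrix.det_of_isUpperTriangular fun l j (hjl : j < l) => by
      simp [U, Nat.choose_eq_zero_of_lt (Fin.lt_def.mp hjl)]]
    simp [U]
  have hAU : casoratiMatrix p a * U =
      Matrix.of fun i (j : Fin m) => Δ_[1] ^[j] (fun y => (p i).comp (X - C y)) a := by
    ext1 i j
    rw [Matrix.mul_apply, Matrix.of_apply, fwdDiff_iter_eq_sum_shift]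
    refine (Fin.sum_univ_eq_sum_range (fun l => (p i).comp (X - C ((l : R) + a)) *
      (((-1 : ℤ) ^ ((j : ℕ) - l) * (j : ℕ).choose l : ℤ) : R[X])) m).trans ?_
    refine (sum_subset (range_subset_range.mpr j.isLt) fun l _ hl => ?_).symm.trans
      (sum_congr rfl fun l _ => ?_)
    · rw [Nat.choose_eq_zero_of_lt (by simpa using hl)]
      simp
    · rw [zsmul_eq_mul, mul_comm, nsmul_one, add_comm]
  rw [← hAU, Matrix.det_mul, hU, mul_one]

section Domain

variable [IsDomain R] [CharZero R]

theorem det_neg_one_pow_mul_descFactorial_mul_ne_zero (D : Fin m → ℕ)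
    (hD : Function.Injective D) (c : Fin m → R) (hc : ∀ i, c i ≠ 0) :
    (Matrix.of fun i (j : Fin m) =>
      (-1) ^ (j : ℕ) * ((D i).descFactorial j : R) * c i).det ≠ 0 := by
  have hV := Matrix.det_vandermonde_ne_zero_iff.mpr
    (Nat.cast_injective.comp hD : Function.Injective fun i => (D i : R))
  rw [Matrix.det_eval_matrixOfPolynomials_eq_det_vandermonde _ (fun j => descPochhammer R j)
    (fun j => descPochhammer_natDegree R j) (fun j => monic_descPochhammer R j)] at hV
  have hcol := Matrix.det_mul_column c (Matrix.of fun i (j : Fin m) =>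
    (-1 : R) ^ (j : ℕ) * (descPochhammer R j).eval (D i : R))
  have hrow := Matrix.det_mul_row (fun j : Fin m => (-1 : R) ^ (j : ℕ))
    (Matrix.of fun i (j : Fin m) => (descPochhammer R j).eval (D i : R))
  simp only [Matrix.of_apply] at hcol hrow
  convert_to (Matrix.of fun i (j : Fin m) =>
    c i * ((-1) ^ (j : ℕ) * (descPochhammer R j).eval (D i : R))).det ≠ 0
  · congr
    ext i j
    rw [descPochhammer_eval_eq_descFactorial]
    ring
  rw [hcol, hrow]
  exact mul_ne_zero (prod_ne_zero_iff.mpr fun i _ => hc i)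
    (mul_ne_zero (prod_ne_zero_iff.mpr fun j _ => pow_ne_zero _ (neg_ne_zero.mpr one_ne_zero)) hV)

theorem det_casoratiMatrix_ne_zero_and_natDegree (p : Fin m → R[X]) (a : R)
    (hp : ∀ i, p i ≠ 0) (hD : Function.Injective fun i => (p i).natDegree) :
    (casoratiMatrix p a).det ≠ 0 ∧
      (casoratiMatrix p a).det.natDegree + ∑ j : Fin m, (j : ℕ) = ∑ i, (p i).natDegree := by
  set B := Matrix.of fun i (j : Fin m) => Δ_[1] ^[j] (fun y => (p i).comp (X - C y)) a *
    X ^ (j : ℕ)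
  have hB : B.det = (casoratiMatrix p a).det * X ^ ∑ j : Fin m, (j : ℕ) := by
    rw [← prod_pow_eq_pow_sum, ← Matrix.det_diagonal, det_casoratiMatrix_eq_det_fwdDiff,
      ← Matrix.det_mul]
    congr
    ext i j
    rw [Matrix.mul_diagonal]
    rfl
  have hle : ∀ i j, (B i j).natDegree ≤ (p i).natDegree := fun i j =>
    natDegree_fwdDiff_iter_comp_X_sub_C_mul_X_pow_le (p i) j a
  have htop : B.det.coeff (∑ i, (p i).natDegree) ≠ 0 := by
    rw [Matrix.coeff_det_of_natDegree_le hle]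
    simp only [B, Matrix.of_apply, coeff_fwdDiff_iter_comp_X_sub_C_mul_X_pow_natDegree]
    exact det_neg_one_pow_mul_descFactorial_mul_ne_zero _ hD _
      fun i => leadingCoeff_ne_zero.mpr (hp i)
  have hne : (casoratiMatrix p a).det ≠ 0 := fun h => htop (by rw [hB, h, zero_mul, coeff_zero])
  refine ⟨hne, ?_⟩
  rw [← natDegree_mul_X_pow _ hne, ← hB]
  exact natDegree_eq_of_le_of_coeff_ne_zero (Matrix.natDegree_det_le_of_natDegree_le hle) htop

end Domain

theorem Fin.sum_ite_sub_sum_val (α m : ℕ) (P : Fin m → Prop) [DecidablePred P] :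
    ((∑ i : Fin m, (if P i then α + i else m - 1 - i : ℕ) : ℕ) : ℤ) - ∑ i : Fin m, ((i : ℕ) : ℤ) =
      (#{i | P i} : ℤ) * α + ((m : ℤ) - #{i | P i}) * (m + 1)
        - 2 * ∑ i with ¬ P i, ((i : ℤ) + 1) := by
  have hcard : (#{i | P i} : ℤ) + #{i | ¬ P i} = m := by
    exact_mod_cast (card_filter_add_card_filter_not (s := univ) P).trans (card_fin m)
  rw [Nat.cast_sum, ← sum_sub_distrib]
  calc ∑ i : Fin m, (((if P i then α + i else m - 1 - i : ℕ) : ℤ) - i)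
      = ∑ i : Fin m, (if P i then (α : ℤ) else (m + 1) - 2 * ((i : ℤ) + 1)) :=
        sum_congr rfl fun i _ => by split_ifs <;> omega
    _ = _ := by
      rw [sum_ite, Finset.sum_const, nsmul_eq_mul, sum_sub_distrib, Finset.sum_const, nsmul_eq_mul,
        ← mul_sum]
      linear_combination (m + 1 : ℤ) * hcard

theorem calR_diagonal (α m : ℕ) (d : Fin m → ℝ) (j0 : Fin m) :
    calR α m (Matrix.diagonal d) j0 =
      C ((α - 1).factorial / (m - 1 - j0).factorial : ℝ) *
          (ascPochhammer ℝ (m - 1 - j0)).comp (X + C 1) +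
        C ((j0 : ℕ).factorial * ((-1) ^ (j0 : ℕ) * d j0 / (α + j0).factorial) : ℝ) *
          (ascPochhammer ℝ α).comp (X + C 1) *
            (ascPochhammer ℝ j0).comp (X + C (1 - (j0 : ℝ))) := by
  rw [calR, sum_eq_single j0 (fun i _ hi => by simp [Matrix.diagonal_apply_ne' d hi]) (by simp),
    Matrix.diagonal_apply_eq, C_mul, ← C_1, show X - C (j0 : ℝ) + C 1 = X + C (1 - (j0 : ℝ)) by
      rw [C_sub]; ring]
  ring

theorem degree_calR_diagonal {α m : ℕ} (hα : m ≤ α) (d : Fin m → ℝ) (j0 : Fin m) :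
    (calR α m (Matrix.diagonal d) j0).degree =
      if d j0 ≠ 0 then ((α + j0 : ℕ) : WithBot ℕ) else ((m - 1 - j0 : ℕ) : WithBot ℕ) := by
  have hlow : (C ((α - 1).factorial / (m - 1 - j0).factorial : ℝ) *
      (ascPochhammer ℝ (m - 1 - j0)).comp (X + C 1)).degree = (m - 1 - j0 : ℕ) := by
    rw [degree_C_mul (by positivity), degree_ascPochhammer_comp_X_add_C]
  rw [calR_diagonal]
  split_ifs with hd
  · have htop : (C ((j0 : ℕ).factorial * ((-1) ^ (j0 : ℕ) * d j0 / (α + j0).factorial) : ℝ) *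
        (ascPochhammer ℝ α).comp (X + C 1) *
          (ascPochhammer ℝ j0).comp (X + C (1 - (j0 : ℝ)))).degree = (α + j0 : ℕ) := by
      rw [degree_mul, degree_mul, degree_C (by simp [hd, Nat.factorial_ne_zero]),
        degree_ascPochhammer_comp_X_add_C, degree_ascPochhammer_comp_X_add_C, zero_add]
      norm_cast
    rw [degree_add_eq_right_of_degree_lt (by rw [hlow, htop]; exact_mod_cast (by omega)), htop]
  · simpa [not_not.mp hd] using hlow

/-- For diagonal M = diag(M_0,...,M_{m-1}) with M_{m-1} ≠ 0:
deg ℛ_j = α + j - 1 if M_{j-1} ≠ 0 and m - j if M_{j-1} = 0, and with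
s = #{j : M_{j-1} ≠ 0}, the Casorati determinant Ω(x) = det(ℛ_i(x-j)) has degree
sα + (m-s)(m+1) - 2 ∑_{j : M_{j-1} = 0} j. -/
theorem diagonal_casorati_degree (α m : ℕ) (hα : m ≤ α)
    (d : Fin m → ℝ) :
    (∀ j0 : Fin m, (calR α m (Matrix.diagonal d) j0).degree =
      if d j0 ≠ 0 then ((α + (j0 : ℕ) : ℕ) : WithBot ℕ)
      else ((m - 1 - (j0 : ℕ) : ℕ) : WithBot ℕ)) ∧
    (let Ω : Polynomial ℝ := Matrix.det (Matrix.of fun i j : Fin m =>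
        (calR α m (Matrix.diagonal d) i).comp (Polynomial.X - Polynomial.C ((j : ℝ) + 1)))
     let s : ℕ := (Finset.univ.filter (fun j0 : Fin m => d j0 ≠ 0)).card
     Ω ≠ 0 ∧ (Ω.natDegree : ℤ) = (s : ℤ) * α + ((m : ℤ) - s) * (m + 1)
        - 2 * ∑ j0 ∈ Finset.univ.filter (fun j0 : Fin m => d j0 = 0), ((j0 : ℤ) + 1)) := by
  let D : Fin m → ℕ := fun i => if d i ≠ 0 then α + i else m - 1 - i
  have hdeg := degree_calR_diagonal hα d
  have hdegD : ∀ i, (calR α m (Matrix.diagonal d) i).degree = D i := fun i =>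
    (hdeg i).trans (by simp only [D]; split_ifs <;> rfl)
  have hnat i := natDegree_eq_of_degree_eq_some (hdegD i)
  have hD : Function.Injective D := fun i j hij =>
    Fin.ext (by simp only [D] at hij; split_ifs at hij <;> omega)
  obtain ⟨hne, hsum⟩ := det_casoratiMatrix_ne_zero_and_natDegree
    (fun i => calR α m (Matrix.diagonal d) i) 1 (fun i h => by simpa [h] using hdegD i)
    (by simpa only [hnat] using hD)
  refine ⟨hdeg, hne, ?_⟩
  have harith := Fin.sum_ite_sub_sum_val α m (fun i => d i ≠ 0)
  simp only [not_not] at harith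
  simp only [hnat, D] at hsum
  rw [← harith, ← hsum, Nat.cast_add, Nat.cast_sum, add_sub_cancel_right]
  rfl
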